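/- For any probability measure ρ on S^{d-1} with mean E and Gibbs mean v_α, one has ⟨E, v_α⟩ = V(ρ) + (|E|^2 + |v_α|^2)/2 − (1/2)∫|v − v_α|^2 dρ, and consequently ⟨E, v_α⟩ ≥ V(ρ) + (|E|^2 + |v_α|^2)/2 − 2 C_{α,E} V(ρ). -/

import Mathlib

open MeasureTheory Metric Real

/-!
Expanding the square shows that `u ↦ ∫ w v ‖v - u‖² dρ` is, up to a constant, the quadratic
`(∫ w) ‖u - c‖²` around the weighted mean `c`. With `w = 1` this is the bias–variance identity
`∫ ‖v - u‖² = 2V + ‖E - u‖²`, which at `u = v_α` is the claimed equality after polarising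
`‖E - v_α‖²`. With the Gibbs weight it shows that `v_α` minimises `∫ w ‖v - u‖²`, in particular
`∫ w ‖v - v_α‖² ≤ ∫ w ‖v - E‖²`. On the sphere the Gibbs weight lies between
`exp (-α sup e)` and `exp (-α inf e)`, whose ratio is `C`, so `∫ ‖v - v_α‖² ≤ C ∫ ‖v - E‖² = 2CV`,
which bounds the defect term by `CV ≤ 2CV`.
-/

theorem mul_integral_le_mul_integral_of_integral_mul_le {X : Type*} [MeasurableSpace X]
    {μ : Measure X} {w f g : X → ℝ} {a b : ℝ} (hwab : ∀ᵐ x ∂μ, w x ∈ Set.Icc a b)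
    (hf0 : 0 ≤ᵐ[μ] f) (hg0 : 0 ≤ᵐ[μ] g) (hf : Integrable f μ) (hg : Integrable g μ)
    (hwf : Integrable (fun x => w x * f x) μ) (hwg : Integrable (fun x => w x * g x) μ)
    (h : ∫ x, w x * f x ∂μ ≤ ∫ x, w x * g x ∂μ) :
    a * ∫ x, f x ∂μ ≤ b * ∫ x, g x ∂μ := by
  rw [← integral_const_mul, ← integral_const_mul]
  calc ∫ x, a * f x ∂μ ≤ ∫ x, w x * f x ∂μ :=
        integral_mono_ae (hf.const_mul a) hwf <| by
          filter_upwards [hwab, hf0] with x hx hfx using mul_le_mul_of_nonneg_right hx.1 hfx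
    _ ≤ ∫ x, w x * g x ∂μ := h
    _ ≤ ∫ x, b * g x ∂μ :=
        integral_mono_ae hwg (hg.const_mul b) <| by
          filter_upwards [hwab, hg0] with x hx hgx using mul_le_mul_of_nonneg_right hx.2 hgx

section WeightedSecondMoment

variable {H : Type*} [NormedAddCommGroup H] [InnerProductSpace ℝ H]

theorem mul_norm_sub_sq_eq (t : ℝ) (v u : H) :
    t * ‖v - u‖ ^ 2 = t * ‖v‖ ^ 2 - 2 * inner ℝ u (t • v) + t * ‖u‖ ^ 2 := by
  rw [norm_sub_sq_real, real_inner_smul_right, real_inner_comm]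
  ring

variable [MeasurableSpace H] {μ : Measure H} {w : H → ℝ}

theorem integrable_mul_norm_sub_sq (hw : Integrable w μ) (hwv : Integrable (fun v => w v • v) μ)
    (hwn : Integrable (fun v => w v * ‖v‖ ^ 2) μ) (u : H) :
    Integrable (fun v => w v * ‖v - u‖ ^ 2) μ := by
  simp_rw [mul_norm_sub_sq_eq]
  exact (hwn.sub ((hwv.const_inner u).const_mul 2)).add (hw.mul_const _)

variable [CompleteSpace H]

theorem integral_mul_norm_sub_sq (hw : Integrable w μ) (hwv : Integrable (fun v => w v • v) μ)
    (hwn : Integrable (fun v => w v * ‖v‖ ^ 2) μ) (u : H) :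
    ∫ v, w v * ‖v - u‖ ^ 2 ∂μ =
      ∫ v, w v * ‖v‖ ^ 2 ∂μ - 2 * inner ℝ u (∫ v, w v • v ∂μ) + (∫ v, w v ∂μ) * ‖u‖ ^ 2 := by
  have hinner := (hwv.const_inner (𝕜 := ℝ) u).const_mul 2
  simp_rw [mul_norm_sub_sq_eq]
  rw [integral_add _ (hw.mul_const _), integral_sub hwn hinner, integral_const_mul,
    integral_inner hwv, integral_mul_const]
  exact hwn.sub hinner

theorem integral_mul_norm_sub_sq_eq_add (hw : Integrable w μ)
    (hwv : Integrable (fun v => w v • v) μ) (hwn : Integrable (fun v => w v * ‖v‖ ^ 2) μ)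
    {c : H} (hc : ∫ v, w v • v ∂μ = (∫ v, w v ∂μ) • c) (u : H) :
    ∫ v, w v * ‖v - u‖ ^ 2 ∂μ = ∫ v, w v * ‖v - c‖ ^ 2 ∂μ + (∫ v, w v ∂μ) * ‖c - u‖ ^ 2 := by
  rw [integral_mul_norm_sub_sq hw hwv hwn, integral_mul_norm_sub_sq hw hwv hwn, hc,
    real_inner_smul_right, real_inner_smul_right, real_inner_self_eq_norm_sq, norm_sub_sq_real,
    real_inner_comm]
  ring

theorem integral_mul_norm_sub_sq_le (hw0 : 0 ≤ᵐ[μ] w) (hw : Integrable w μ)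
    (hwv : Integrable (fun v => w v • v) μ) (hwn : Integrable (fun v => w v * ‖v‖ ^ 2) μ)
    {c : H} (hc : ∫ v, w v • v ∂μ = (∫ v, w v ∂μ) • c) (u : H) :
    ∫ v, w v * ‖v - c‖ ^ 2 ∂μ ≤ ∫ v, w v * ‖v - u‖ ^ 2 ∂μ := by
  rw [integral_mul_norm_sub_sq_eq_add hw hwv hwn hc u]
  have := integral_nonneg_of_ae hw0
  nlinarith [sq_nonneg ‖c - u‖]

theorem integral_norm_sub_sq_eq_add [IsProbabilityMeasure μ] (hv : Integrable (fun v => v) μ)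
    (hn : Integrable (fun v => ‖v‖ ^ 2) μ) (u : H) :
    ∫ v, ‖v - u‖ ^ 2 ∂μ = ∫ v, ‖v - ∫ x, x ∂μ‖ ^ 2 ∂μ + ‖(∫ x, x ∂μ) - u‖ ^ 2 := by
  have h := integral_mul_norm_sub_sq_eq_add (w := fun _ => 1) (integrable_const 1)
    (by simpa using hv) (by simpa using hn) (c := ∫ x, x ∂μ) (by simp) u
  simpa using h

theorem inner_integral_eq [IsProbabilityMeasure μ] (hv : Integrable (fun v => v) μ)
    (hn : Integrable (fun v => ‖v‖ ^ 2) μ) (u : H) :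
    inner ℝ (∫ x, x ∂μ) u = (1 / 2) * ∫ v, ‖v - ∫ x, x ∂μ‖ ^ 2 ∂μ
      + (‖∫ x, x ∂μ‖ ^ 2 + ‖u‖ ^ 2) / 2 - (1 / 2) * ∫ v, ‖v - u‖ ^ 2 ∂μ := by
  rw [integral_norm_sub_sq_eq_add hv hn u, norm_sub_sq_real]
  ring

theorem mul_integral_norm_sub_sq_le_of_weighted_mean [IsFiniteMeasure μ] {a b : ℝ} (ha : 0 ≤ a)
    (hwab : ∀ᵐ v ∂μ, w v ∈ Set.Icc a b) (hw : Integrable w μ)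
    (hwv : Integrable (fun v => w v • v) μ) (hwn : Integrable (fun v => w v * ‖v‖ ^ 2) μ)
    (hv : Integrable (fun v => v) μ) (hn : Integrable (fun v => ‖v‖ ^ 2) μ) {c : H}
    (hc : ∫ v, w v • v ∂μ = (∫ v, w v ∂μ) • c) (u : H) :
    a * ∫ v, ‖v - c‖ ^ 2 ∂μ ≤ b * ∫ v, ‖v - u‖ ^ 2 ∂μ := by
  have hsq (u : H) : Integrable (fun v => ‖v - u‖ ^ 2) μ := by
    simpa using integrable_mul_norm_sub_sq (integrable_const 1) (by simpa using hv)
      (by simpa using hn) u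
  have hw0 : 0 ≤ᵐ[μ] w := hwab.mono fun v hv => ha.trans hv.1
  exact mul_integral_le_mul_integral_of_integral_mul_le hwab (ae_of_all _ fun v => sq_nonneg _)
    (ae_of_all _ fun v => sq_nonneg _) (hsq c) (hsq u) (integrable_mul_norm_sub_sq hw hwv hwn c)
    (integrable_mul_norm_sub_sq hw hwv hwn u) (integral_mul_norm_sub_sq_le hw0 hw hwv hwn hc u)

end WeightedSecondMoment

theorem exp_neg_mul_mem_Icc {X : Type*} {e : X → ℝ} {s : Set X} {α : ℝ} (hα : 0 ≤ α)
    (hbdd : BddAbove (e '' s) ∧ BddBelow (e '' s)) {x : X} (hx : x ∈ s) :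
    exp (-α * e x) ∈ Set.Icc (exp (-α * sSup (e '' s))) (exp (-α * sInf (e '' s))) := by
  have hsup : e x ≤ sSup (e '' s) := le_csSup hbdd.1 ⟨x, hx, rfl⟩
  have hinf : sInf (e '' s) ≤ e x := csInf_le hbdd.2 ⟨x, hx, rfl⟩
  exact ⟨exp_le_exp.2 (by nlinarith), exp_le_exp.2 (by nlinarith)⟩

theorem ContinuousOn.aestronglyMeasurable_of_ae_mem {X Y : Type*} [TopologicalSpace X]
    [MeasurableSpace X] [OpensMeasurableSpace X] [TopologicalSpace Y]
    [TopologicalSpace.PseudoMetrizableSpace Y] [SecondCountableTopologyEither X Y]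
    {μ : Measure X} {f : X → Y} {s : Set X} (hf : ContinuousOn f s) (hs : MeasurableSet s)
    (hμs : ∀ᵐ x ∂μ, x ∈ s) : AEStronglyMeasurable f μ := by
  simpa [Measure.restrict_eq_self_of_ae_mem hμs] using hf.aestronglyMeasurable (μ := μ) hs

theorem MeasureTheory.Integrable.smul_self_of_ae_norm_eq_one {H : Type*} [NormedAddCommGroup H]
    [NormedSpace ℝ H] [MeasurableSpace H] [OpensMeasurableSpace H] [SecondCountableTopology H]
    {μ : Measure H} {f : H → ℝ} (hf : Integrable f μ) (hμ : ∀ᵐ v ∂μ, ‖v‖ = 1) :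
    Integrable (fun v => f v • v) μ :=
  hf.norm.mono' (hf.aestronglyMeasurable.smul aestronglyMeasurable_id)
    (hμ.mono fun v hv => by simp [norm_smul, hv])

theorem MeasureTheory.Integrable.mul_norm_sq_of_ae_norm_eq_one {H : Type*} [NormedAddCommGroup H]
    [MeasurableSpace H] {μ : Measure H} {f : H → ℝ} (hf : Integrable f μ)
    (hμ : ∀ᵐ v ∂μ, ‖v‖ = 1) : Integrable (fun v => f v * ‖v‖ ^ 2) μ :=
  hf.congr (hμ.mono fun v hv => by simp [hv])

theorem stmt_12 {d : ℕ} (e : EuclideanSpace ℝ (Fin d) → ℝ) (α : ℝ) (hα : 0 < α)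
    (hcont : ContinuousOn e (sphere (0 : EuclideanSpace ℝ (Fin d)) 1))
    (hbdd : BddAbove (e '' sphere (0 : EuclideanSpace ℝ (Fin d)) 1) ∧
      BddBelow (e '' sphere (0 : EuclideanSpace ℝ (Fin d)) 1))
    (ρ : Measure (EuclideanSpace ℝ (Fin d))) [IsProbabilityMeasure ρ]
    (hsph : ∀ᵐ v ∂ρ, ‖v‖ = 1)
    (E : EuclideanSpace ℝ (Fin d)) (hE : E = ∫ w, w ∂ρ)
    (V : ℝ) (hV : V = (1 / 2) * ∫ v, ‖v - E‖ ^ 2 ∂ρ)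
    (vα : EuclideanSpace ℝ (Fin d))
    (hvα : vα = (∫ v, Real.exp (-α * e v) ∂ρ)⁻¹ • ∫ v, Real.exp (-α * e v) • v ∂ρ)
    (C : ℝ)
    (hC : C = Real.exp (α * (sSup (e '' sphere (0 : EuclideanSpace ℝ (Fin d)) 1)
      - sInf (e '' sphere (0 : EuclideanSpace ℝ (Fin d)) 1)))) :
    (inner ℝ E vα : ℝ) = V + (‖E‖ ^ 2 + ‖vα‖ ^ 2) / 2 - (1 / 2) * ∫ v, ‖v - vα‖ ^ 2 ∂ρ ∧
      V + (‖E‖ ^ 2 + ‖vα‖ ^ 2) / 2 - 2 * C * V ≤ (inner ℝ E vα : ℝ) := by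
  set S := sphere (0 : EuclideanSpace ℝ (Fin d)) 1
  set w : EuclideanSpace ℝ (Fin d) → ℝ := fun v => exp (-α * e v)
  have hS : ∀ᵐ v ∂ρ, v ∈ S := hsph.mono fun v hv => by simpa [S] using hv
  have hw_Icc : ∀ᵐ v ∂ρ, w v ∈ Set.Icc (exp (-α * sSup (e '' S))) (exp (-α * sInf (e '' S))) :=
    hS.mono fun v hv => exp_neg_mul_mem_Icc hα.le hbdd hv
  have hw_meas : AEStronglyMeasurable w ρ :=
    ContinuousOn.aestronglyMeasurable_of_ae_mem (by fun_prop) isClosed_sphere.measurableSet hS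
  have hw : Integrable w ρ := .of_bound hw_meas _
    (hw_Icc.mono fun v hv => by rw [norm_of_nonneg (exp_pos _).le]; exact hv.2)
  have h1 : Integrable (fun _ => (1 : ℝ)) ρ := integrable_const 1
  have hv : Integrable (fun v => v) ρ := by simpa using h1.smul_self_of_ae_norm_eq_one hsph
  have hn : Integrable (fun v => ‖v‖ ^ 2) ρ := by simpa using h1.mul_norm_sq_of_ae_norm_eq_one hsph
  have hequality : (inner ℝ E vα : ℝ)
      = V + (‖E‖ ^ 2 + ‖vα‖ ^ 2) / 2 - (1 / 2) * ∫ v, ‖v - vα‖ ^ 2 ∂ρ := by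
    subst hV hE
    exact inner_integral_eq hv hn vα
  refine ⟨hequality, ?_⟩
  have hc : ∫ v, w v • v ∂ρ = (∫ v, w v ∂ρ) • vα := by
    rw [hvα, smul_smul, mul_inv_cancel₀ (integral_exp_pos hw).ne', one_smul]
  have hcompare := mul_integral_norm_sub_sq_le_of_weighted_mean (exp_pos _).le hw_Icc hw
    (hw.smul_self_of_ae_norm_eq_one hsph) (hw.mul_norm_sq_of_ae_norm_eq_one hsph) hv hn hc E
  have hratio : exp (-α * sInf (e '' S)) = exp (-α * sSup (e '' S)) * C := by
    rw [hC, ← exp_add]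
    ring_nf
  rw [hratio, mul_assoc] at hcompare
  have hdefect : ∫ v, ‖v - vα‖ ^ 2 ∂ρ ≤ 2 * C * V := by
    rw [hV]
    linarith [le_of_mul_le_mul_left hcompare (exp_pos _)]
  have hCV : 0 ≤ C * V := mul_nonneg (hC ▸ exp_pos _).le (hV ▸ by positivity)
  rw [hequality]
  linarith
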